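/- Consider the chain of N particles q_1, ..., q_N with equations q̈ = −Vq + c sin(ωt) e_N, where V is the tridiagonal matrix with diagonal 2ω₁² (except V_{NN} = ω₁²) and off-diagonal −ω₁², e_N = (0, ..., 0, 1), and zero initial conditions q(0) = p(0) = 0. Let ν_k² = 2ω₁²(cos(πk/(N+1/2)) + 1) be the eigenvalues of V with orthonormal eigenvectors g_k. If ω ≠ ν_k for every k, then the time-averaged kinetic energy of particle j, ⟨T_j⟩ = ⟨p_j²(t)⟩/2, exists and equals (1/4)(Σ_{k=1}^{N} (g_k, e_N)(g_k, e_j)·ωc/(ν_k² − ω²))² + (1/4) Σ_{k=1}^{N} (g_k, e_N)²(g_k, e_j)²·(ωc/(ν_k² − ω²))². -/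

import Mathlib

/-!
Projecting the equations of motion on an eigenvector `g_k` of `V` decouples the chain into
forced oscillators `ẍ = -ν_k² x + c (g_k, e_N) sin ωt`, whose velocity from rest is
`p̂_k(t) ∝ cos ωt - cos ν_k t`. Expanding `p_j` in the orthonormal eigenbasis therefore makes it a
trigonometric polynomial `Σ_k a_k (cos ωt - cos ν_k t)`. The frequencies `ω, ν_1, …, ν_N` are
positive and pairwise distinct, so in the time average of its square every cross term
`cos αt cos βt` averages to `0` and every square to `1/2`: what remains is a quarter of the
squared coefficient `Σ_k a_k` of `cos ωt` plus a quarter of `Σ_k a_k²`.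
-/

open Filter Topology Matrix

/-- The tridiagonal stiffness matrix of the chain: diagonal entries `2ω₁²` except the
last one which is `ω₁²`, and off-diagonal entries `-ω₁²`. -/
noncomputable def Vchain (N : ℕ) (ω1 : ℝ) : Matrix (Fin N) (Fin N) ℝ :=
  Matrix.of fun i j =>
    if i = j then (if (i : ℕ) = N - 1 then ω1 ^ 2 else 2 * ω1 ^ 2)
    else if (i : ℕ) + 1 = (j : ℕ) ∨ (j : ℕ) + 1 = (i : ℕ) then -ω1 ^ 2 else 0

/-- The eigenvalues `ν_k² = 2ω₁²(cos(πk/(N + 1/2)) + 1)` of `Vchain`. -/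
noncomputable def nusq (N : ℕ) (ω1 : ℝ) (k : ℕ) : ℝ :=
  2 * ω1 ^ 2 * (Real.cos (Real.pi * k / ((N : ℝ) + 1 / 2)) + 1)

/-- `eVec N m` is the standard basis vector `e_m` (particles are numbered `1, …, N`,
coordinate `i : Fin N` corresponding to particle `i + 1`). -/
def eVec (N : ℕ) (m : ℕ) : Fin N → ℝ := fun i => if (i : ℕ) + 1 = m then 1 else 0

open Real

noncomputable def timeAvg (h : ℝ → ℝ) (t : ℝ) : ℝ := (1 / t) * ∫ s in (0 : ℝ)..t, h s

lemma timeAvg_const_mul (a : ℝ) (h : ℝ → ℝ) (t : ℝ) :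
    timeAvg (fun s => a * h s) t = a * timeAvg h t := by
  rw [timeAvg, timeAvg, intervalIntegral.integral_const_mul]
  ring

lemma timeAvg_add {f h : ℝ → ℝ} (hf : Continuous f) (hh : Continuous h) (t : ℝ) :
    timeAvg (fun s => f s + h s) t = timeAvg f t + timeAvg h t := by
  rw [timeAvg, timeAvg, timeAvg, intervalIntegral.integral_add (hf.intervalIntegrable _ _)
    (hh.intervalIntegrable _ _), mul_add]

lemma timeAvg_finsetSum {ι : Type*} (S : Finset ι) {h : ι → ℝ → ℝ}
    (hh : ∀ i ∈ S, Continuous (h i)) (t : ℝ) :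
    timeAvg (fun s => ∑ i ∈ S, h i s) t = ∑ i ∈ S, timeAvg (h i) t := by
  rw [timeAvg, intervalIntegral.integral_finsetSum fun i hi => (hh i hi).intervalIntegrable _ _,
    Finset.mul_sum]
  rfl

lemma tendsto_timeAvg_const (a : ℝ) : Tendsto (timeAvg fun _ => a) atTop (𝓝 a) := by
  refine tendsto_const_nhds.congr' ?_
  filter_upwards [eventually_ne_atTop 0] with t ht
  rw [timeAvg, intervalIntegral.integral_const, smul_eq_mul, sub_zero]
  field_simp

lemma tendsto_timeAvg_cos_mul (γ : ℝ) :
    Tendsto (timeAvg fun s => cos (γ * s)) atTop (𝓝 (if γ = 0 then 1 else 0)) := by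
  split_ifs with hγ
  · simpa [hγ] using tendsto_timeAvg_const 1
  have hint : timeAvg (fun s => cos (γ * s)) = fun t => t⁻¹ * (sin (γ * t) / γ) := by
    funext t
    rw [timeAvg, intervalIntegral.integral_comp_mul_left (fun x => cos x) hγ, integral_cos]
    simp only [mul_zero, sin_zero, sub_zero, smul_eq_mul]
    ring
  have hbdd : IsBoundedUnder (· ≤ ·) atTop ((‖·‖) ∘ fun t => sin (γ * t) / γ) :=
    isBoundedUnder_of ⟨|γ|⁻¹, fun t => by
      simpa [norm_div, div_eq_mul_inv] using
        mul_le_mul_of_nonneg_right (abs_sin_le_one (γ * t)) (inv_nonneg.2 (abs_nonneg γ))⟩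
  rw [hint]
  exact tendsto_inv_atTop_zero.zero_mul_isBoundedUnder_le hbdd

lemma tendsto_timeAvg_cos_mul_mul_cos_mul {α β : ℝ} (hα : 0 < α) (hβ : 0 < β) :
    Tendsto (timeAvg fun s => cos (α * s) * cos (β * s)) atTop
      (𝓝 (if α = β then 1 / 2 else 0)) := by
  have hsplit : timeAvg (fun s => cos (α * s) * cos (β * s)) = fun t =>
      1 / 2 * timeAvg (fun s => cos ((α - β) * s)) t
        + 1 / 2 * timeAvg (fun s => cos ((α + β) * s)) t := by
    funext t
    rw [← timeAvg_const_mul, ← timeAvg_const_mul, ← timeAvg_add (by fun_prop) (by fun_prop)]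
    congr 1
    funext s
    have := two_mul_cos_mul_cos (α * s) (β * s)
    rw [sub_mul, add_mul]
    linarith
  rw [hsplit]
  convert ((tendsto_timeAvg_cos_mul (α - β)).const_mul (1 / 2)).add
    ((tendsto_timeAvg_cos_mul (α + β)).const_mul (1 / 2)) using 2
  have hsum : α + β ≠ 0 := by positivity
  by_cases h : α = β <;> simp [h, sub_eq_zero, hsum, hβ.ne']

lemma tendsto_timeAvg_sq_sum_mul_cos {ι : Type*} (S : Finset ι) (a μ : ι → ℝ)
    (hμ : ∀ i ∈ S, 0 < μ i) (hinj : Set.InjOn μ S) :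
    Tendsto (timeAvg fun s => (∑ i ∈ S, a i * cos (μ i * s)) ^ 2 / 2) atTop
      (𝓝 (1 / 4 * ∑ i ∈ S, a i ^ 2)) := by
  classical
  have hexpand : (fun s => (∑ i ∈ S, a i * cos (μ i * s)) ^ 2 / 2) = fun s =>
      ∑ i ∈ S, ∑ k ∈ S, a i * a k / 2 * (cos (μ i * s) * cos (μ k * s)) := by
    funext s
    rw [sq, Finset.sum_mul_sum, Finset.sum_div]
    refine Finset.sum_congr rfl fun i _ => ?_
    rw [Finset.sum_div]
    exact Finset.sum_congr rfl fun k _ => by ring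
  have havg : timeAvg (fun s => (∑ i ∈ S, a i * cos (μ i * s)) ^ 2 / 2) = fun t =>
      ∑ i ∈ S, ∑ k ∈ S, a i * a k / 2 * timeAvg (fun s => cos (μ i * s) * cos (μ k * s)) t := by
    funext t
    rw [hexpand, timeAvg_finsetSum S (fun i _ => by fun_prop)]
    refine Finset.sum_congr rfl fun i _ => ?_
    rw [timeAvg_finsetSum S (fun k _ => by fun_prop)]
    exact Finset.sum_congr rfl fun k _ => timeAvg_const_mul _ _ t
  have hlimit : ∑ i ∈ S, ∑ k ∈ S, a i * a k / 2 * (if μ i = μ k then 1 / 2 else 0)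
      = 1 / 4 * ∑ i ∈ S, a i ^ 2 := by
    rw [Finset.mul_sum]
    refine Finset.sum_congr rfl fun i hi => ?_
    have hdiag : ∀ k ∈ S, a i * a k / 2 * (if μ i = μ k then 1 / 2 else 0)
        = if i = k then 1 / 4 * a i ^ 2 else 0 := by
      intro k hk
      by_cases hik : i = k
      · subst hik; simp only [if_true]; ring
      · rw [if_neg hik, if_neg fun h => hik (hinj hi hk h), mul_zero]
    rw [Finset.sum_congr rfl hdiag, Finset.sum_ite_eq S i, if_pos hi]
  rw [havg, ← hlimit]
  exact tendsto_finsetSum S fun i hi => tendsto_finsetSum S fun k hk =>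
    (tendsto_timeAvg_cos_mul_mul_cos_mul (hμ i hi) (hμ k hk)).const_mul _

lemma tendsto_timeAvg_sq_sum_mul_cos_sub_cos {ι : Type*} (S : Finset ι) (a ν : ι → ℝ) {ω : ℝ}
    (hω : 0 < ω) (hν : ∀ i ∈ S, 0 < ν i) (hinj : Set.InjOn ν S) (hres : ∀ i ∈ S, ν i ≠ ω) :
    Tendsto (timeAvg fun s => (∑ i ∈ S, a i * (cos (ω * s) - cos (ν i * s))) ^ 2 / 2) atTop
      (𝓝 (1 / 4 * (∑ i ∈ S, a i) ^ 2 + 1 / 4 * ∑ i ∈ S, a i ^ 2)) := by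
  -- the forcing frequency `ω` becomes the extra mode `none`
  set μ : Option ι → ℝ := fun o => o.elim ω ν
  set b : Option ι → ℝ := fun o => o.elim (∑ i ∈ S, a i) fun i => -a i
  have hrewrite : ∀ s, ∑ i ∈ S, a i * (cos (ω * s) - cos (ν i * s))
      = ∑ o ∈ Finset.insertNone S, b o * cos (μ o * s) := by
    intro s
    rw [Finset.sum_insertNone]
    simp only [b, μ, Option.elim]
    rw [Finset.sum_mul, ← Finset.sum_add_distrib]
    exact Finset.sum_congr rfl fun i _ => by ring
  have hμ : ∀ o ∈ Finset.insertNone S, 0 < μ o := by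
    rintro (_ | i) hi
    · exact hω
    · exact hν i (Finset.some_mem_insertNone.1 hi)
  have hinjμ : Set.InjOn μ (Finset.insertNone S) := by
    rintro (_ | i) hi (_ | k) hk h
    · rfl
    · exact absurd h.symm (hres k (Finset.some_mem_insertNone.1 hk))
    · exact absurd h (hres i (Finset.some_mem_insertNone.1 hi))
    · exact congrArg some (hinj (Finset.some_mem_insertNone.1 hi)
        (Finset.some_mem_insertNone.1 hk) h)
  have hvalue : 1 / 4 * ∑ o ∈ Finset.insertNone S, b o ^ 2
      = 1 / 4 * (∑ i ∈ S, a i) ^ 2 + 1 / 4 * ∑ i ∈ S, a i ^ 2 := by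
    simp only [Finset.sum_insertNone, b, Option.elim, neg_sq, mul_add]
  simp_rw [hrewrite, ← hvalue]
  exact tendsto_timeAvg_sq_sum_mul_cos (Finset.insertNone S) b μ hμ hinjμ

lemma harmonic_velocity_eq_zero {κ : ℝ} (hκ : 0 ≤ κ) {x y : ℝ → ℝ}
    (hx : ∀ t, HasDerivAt x (y t) t) (hy : ∀ t, HasDerivAt y (-κ * x t) t)
    (hx0 : x 0 = 0) (hy0 : y 0 = 0) (t : ℝ) : y t = 0 := by
  -- the energy `y² + κ x²` is conserved
  have hE : ∀ s, HasDerivAt (fun s => y s ^ 2 + κ * x s ^ 2) 0 s := fun s =>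
    (((hy s).pow 2).add (((hx s).pow 2).const_mul κ)).congr_deriv (by ring)
  have hconst : y t ^ 2 + κ * x t ^ 2 = y 0 ^ 2 + κ * x 0 ^ 2 :=
    is_const_of_deriv_eq_zero (fun s => (hE s).differentiableAt) (fun s => (hE s).deriv) t 0
  rw [hx0, hy0] at hconst
  nlinarith [sq_nonneg (y t), mul_nonneg hκ (sq_nonneg (x t))]

lemma forced_oscillator_velocity {κ ω b : ℝ} (hκ : 0 < κ) (hres : κ ≠ ω ^ 2) {x y : ℝ → ℝ}
    (hx : ∀ t, HasDerivAt x (y t) t) (hy : ∀ t, HasDerivAt y (-κ * x t + b * sin (ω * t)) t)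
    (hx0 : x 0 = 0) (hy0 : y 0 = 0) (t : ℝ) :
    y t = b * ω / (κ - ω ^ 2) * (cos (ω * t) - cos (√κ * t)) := by
  set ν := √κ
  have hν : ν ≠ 0 := (Real.sqrt_pos.2 hκ).ne'
  have hνsq : ν ^ 2 = κ := Real.sq_sqrt hκ.le
  have hden : κ - ω ^ 2 ≠ 0 := sub_ne_zero.2 hres
  set xp : ℝ → ℝ := fun t => b / (κ - ω ^ 2) * (sin (ω * t) - ω / ν * sin (ν * t))
  set yp : ℝ → ℝ := fun t => b * ω / (κ - ω ^ 2) * (cos (ω * t) - cos (ν * t))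
  have hmul : ∀ (a t : ℝ), HasDerivAt (fun s => a * s) a t := fun a t => by
    simpa using (hasDerivAt_id t).const_mul a
  have hxp : ∀ t, HasDerivAt xp (yp t) t := fun t =>
    ((((hmul ω t).sin).sub (((hmul ν t).sin).const_mul (ω / ν))).const_mul _).congr_deriv
      (by simp only [yp]; field_simp)
  have hyp : ∀ t, HasDerivAt yp (-κ * xp t + b * sin (ω * t)) t := fun t =>
    ((((hmul ω t).cos).sub ((hmul ν t).cos)).const_mul _).congr_deriv
      (by simp only [xp]; rw [← hνsq] at hden ⊢; field_simp; ring)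
  have hdiff := harmonic_velocity_eq_zero hκ.le (x := fun t => x t - xp t)
    (fun t => (hx t).sub (hxp t)) (fun t => ((hy t).sub (hyp t)).congr_deriv (by ring))
    (by simp [hx0, xp]) (by simp [hy0, yp]) t
  exact sub_eq_zero.1 hdiff

lemma dotProduct_eq_sum_of_orthonormal {n ι : Type*} [Fintype n] [Fintype ι] [DecidableEq ι]
    {g : ι → n → ℝ} (hcard : Fintype.card ι = Fintype.card n)
    (hg : ∀ k l, g k ⬝ᵥ g l = if k = l then 1 else 0) (x y : n → ℝ) :
    x ⬝ᵥ y = ∑ k, (g k ⬝ᵥ x) * (g k ⬝ᵥ y) := by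
  classical
  set G : Matrix ι n ℝ := Matrix.of g
  have hrows : G * Gᵀ = 1 := by
    ext k l
    exact hg k l
  -- a square matrix with orthonormal rows also has orthonormal columns
  have hcols : Gᵀ * G = 1 := (mul_eq_one_comm_of_card_eq ι n ℝ hcard).1 hrows
  calc x ⬝ᵥ y = x ⬝ᵥ (Gᵀ * G) *ᵥ y := by rw [hcols, one_mulVec]
    _ = (G *ᵥ x) ⬝ᵥ (G *ᵥ y) := by
      rw [← mulVec_mulVec, dotProduct_mulVec, vecMul_transpose]
    _ = ∑ k, (g k ⬝ᵥ x) * (g k ⬝ᵥ y) := rfl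

lemma hasDerivAt_dotProduct_const {n : Type*} [Fintype n] (v : n → ℝ) {x : ℝ → n → ℝ}
    {x' : n → ℝ} {t : ℝ} (hx : ∀ i, HasDerivAt (fun s => x s i) (x' i) t) :
    HasDerivAt (fun s => v ⬝ᵥ x s) (v ⬝ᵥ x') t :=
  HasDerivAt.fun_sum fun i _ => (hx i).const_mul (v i)

lemma hasDerivAt_dotProduct_eigenvector {n : Type*} [Fintype n] {A : Matrix n n ℝ}
    (hA : A.IsSymm) {v : n → ℝ} {κ : ℝ} (hv : A *ᵥ v = κ • v) (f : n → ℝ) (F : ℝ → ℝ)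
    {q p : ℝ → n → ℝ} {t : ℝ}
    (hp : ∀ i, HasDerivAt (fun s => p s i) (-(A *ᵥ q t) i + F t * f i) t) :
    HasDerivAt (fun s => v ⬝ᵥ p s) (-κ * (v ⬝ᵥ q t) + (v ⬝ᵥ f) * F t) t := by
  convert hasDerivAt_dotProduct_const v hp using 1
  have hsym : v ⬝ᵥ A *ᵥ q t = κ * (v ⬝ᵥ q t) := by
    rw [dotProduct_mulVec, ← mulVec_transpose, hA.eq, hv, smul_dotProduct, smul_eq_mul]
  change _ = v ⬝ᵥ (-(A *ᵥ q t) + F t • f)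
  rw [dotProduct_add, dotProduct_neg, dotProduct_smul, hsym, smul_eq_mul]
  ring

lemma dotProduct_eigenvector_velocity {n : Type*} [Fintype n] {A : Matrix n n ℝ}
    (hA : A.IsSymm) {v : n → ℝ} {κ ω c : ℝ} {f : n → ℝ} (hv : A *ᵥ v = κ • v) (hκ : 0 < κ)
    (hres : κ ≠ ω ^ 2) {q p : ℝ → n → ℝ} (hq0 : q 0 = 0) (hp0 : p 0 = 0)
    (hq : ∀ t i, HasDerivAt (fun s => q s i) (p t i) t)
    (hp : ∀ t i, HasDerivAt (fun s => p s i) (-(A *ᵥ q t) i + c * sin (ω * t) * f i) t)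
    (t : ℝ) :
    v ⬝ᵥ p t = c * (v ⬝ᵥ f) * ω / (κ - ω ^ 2) * (cos (ω * t) - cos (√κ * t)) :=
  forced_oscillator_velocity hκ hres (fun t => hasDerivAt_dotProduct_const v (hq t))
    (fun t => (hasDerivAt_dotProduct_eigenvector hA hv f (fun t => c * sin (ω * t))
      (hp t)).congr_deriv (by ring))
    (by simp [hq0]) (by simp [hp0]) t

lemma Vchain_isSymm (N : ℕ) (ω1 : ℝ) : (Vchain N ω1).IsSymm := by
  refine IsSymm.ext fun i j => ?_
  simp only [Vchain, of_apply, eq_comm (a := j), or_comm]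
  split_ifs <;> simp_all

lemma pi_mul_div_mem_Ico {N k : ℕ} (hk : k ≤ N) :
    π * k / ((N : ℝ) + 1 / 2) ∈ Set.Ico 0 π := by
  have hN : (0 : ℝ) < N + 1 / 2 := by positivity
  have hkN : (k : ℝ) ≤ N := by exact_mod_cast hk
  refine ⟨by positivity, ?_⟩
  rw [div_lt_iff₀ hN]
  nlinarith [pi_pos]

lemma nusq_pos {N : ℕ} {ω1 : ℝ} (hω1 : ω1 ≠ 0) {k : ℕ} (hk : k ≤ N) : 0 < nusq N ω1 k := by
  obtain ⟨h0, hπ⟩ := pi_mul_div_mem_Ico hk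
  have hcos : cos π < cos (π * k / ((N : ℝ) + 1 / 2)) :=
    strictAntiOn_cos ⟨h0, hπ.le⟩ ⟨pi_nonneg, le_rfl⟩ hπ
  rw [cos_pi] at hcos
  have : 0 < cos (π * k / ((N : ℝ) + 1 / 2)) + 1 := by linarith
  unfold nusq
  positivity

lemma nusq_strictAntiOn {N : ℕ} {ω1 : ℝ} (hω1 : ω1 ≠ 0) :
    StrictAntiOn (nusq N ω1) (Set.Iic N) := by
  intro k hk l hl hkl
  obtain ⟨hk0, hkπ⟩ := pi_mul_div_mem_Ico (N := N) hk
  obtain ⟨hl0, hlπ⟩ := pi_mul_div_mem_Ico (N := N) hl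
  have harg : π * k / ((N : ℝ) + 1 / 2) < π * l / ((N : ℝ) + 1 / 2) := by gcongr
  have hcos := strictAntiOn_cos ⟨hk0, hkπ.le⟩ ⟨hl0, hlπ.le⟩ harg
  unfold nusq
  have : 0 < ω1 ^ 2 := by positivity
  nlinarith

lemma injOn_sqrt_nusq {N : ℕ} {ω1 : ℝ} (hω1 : ω1 ≠ 0) :
    Set.InjOn (fun k => √(nusq N ω1 k)) (Set.Iic N) := fun _ hk _ hl h =>
  (nusq_strictAntiOn hω1).injOn hk hl
    ((sqrt_inj (nusq_pos hω1 hk).le (nusq_pos hω1 hl).le).1 h)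

lemma dotProduct_eq_sum_Icc_of_orthonormal {N : ℕ} {g : ℕ → Fin N → ℝ}
    (hg : ∀ k l, 1 ≤ k → k ≤ N → 1 ≤ l → l ≤ N → g k ⬝ᵥ g l = if k = l then 1 else 0)
    (x y : Fin N → ℝ) :
    x ⬝ᵥ y = ∑ k ∈ Finset.Icc 1 N, (g k ⬝ᵥ x) * (g k ⬝ᵥ y) := by
  rw [← Finset.sum_coe_sort]
  refine dotProduct_eq_sum_of_orthonormal (g := fun k : Finset.Icc 1 N => g k) (by simp)
    (fun k l => ?_) x y
  obtain ⟨hk1, hkN⟩ := Finset.mem_Icc.1 k.2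
  obtain ⟨hl1, hlN⟩ := Finset.mem_Icc.1 l.2
  simp only [hg k l hk1 hkN hl1 hlN, Subtype.ext_iff]

theorem stmt17_general (N : ℕ) (ω1 ω c : ℝ) (hω1 : 0 < ω1) (hω : 0 < ω)
    -- no resonance: ω ≠ ν_k for every k
    (hres : ∀ k, 1 ≤ k → k ≤ N → ω ≠ Real.sqrt (nusq N ω1 k))
    -- orthonormal eigenvectors g_k of V
    (g : ℕ → Fin N → ℝ)
    (hg : ∀ k, 1 ≤ k → k ≤ N →
      (Vchain N ω1).mulVec (g k) = nusq N ω1 k • g k)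
    (hgortho : ∀ k l, 1 ≤ k → k ≤ N → 1 ≤ l → l ≤ N →
      g k ⬝ᵥ g l = if k = l then 1 else 0)
    -- the dynamics q̈ = -Vq + c sin(ωt) e_N with zero initial conditions
    (q p : ℝ → Fin N → ℝ) (hq0 : q 0 = 0) (hp0 : p 0 = 0)
    (hq : ∀ t i, HasDerivAt (fun s => q s i) (p t i) t)
    (hp : ∀ t i, HasDerivAt (fun s => p s i)
      (-(Vchain N ω1).mulVec (q t) i + c * Real.sin (ω * t) * eVec N N i) t) :
    -- the time-averaged kinetic energy of particle j exists and equals the stated value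
    ∀ j, 1 ≤ j → j ≤ N →
      Tendsto (fun t => (1 / t) * ∫ s in (0:ℝ)..t, (p s ⬝ᵥ eVec N j) ^ 2 / 2)
        atTop
        (nhds ((1 / 4) * (∑ k ∈ Finset.Icc 1 N,
            (g k ⬝ᵥ eVec N N) * (g k ⬝ᵥ eVec N j) * (ω * c / (nusq N ω1 k - ω ^ 2))) ^ 2
          + (1 / 4) * ∑ k ∈ Finset.Icc 1 N,
            (g k ⬝ᵥ eVec N N) ^ 2 * (g k ⬝ᵥ eVec N j) ^ 2
              * (ω * c / (nusq N ω1 k - ω ^ 2)) ^ 2)) := by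
  intro j _ _
  set a : ℕ → ℝ := fun k =>
    (g k ⬝ᵥ eVec N N) * (g k ⬝ᵥ eVec N j) * (ω * c / (nusq N ω1 k - ω ^ 2))
  have hpos : ∀ k ∈ Finset.Icc 1 N, 0 < nusq N ω1 k := fun k hk =>
    nusq_pos hω1.ne' (Finset.mem_Icc.1 hk).2
  have hexpand : ∀ s, p s ⬝ᵥ eVec N j
      = ∑ k ∈ Finset.Icc 1 N, a k * (cos (ω * s) - cos (√(nusq N ω1 k) * s)) := by
    intro s
    rw [dotProduct_eq_sum_Icc_of_orthonormal hgortho]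
    refine Finset.sum_congr rfl fun k hk => ?_
    obtain ⟨hk1, hkN⟩ := Finset.mem_Icc.1 hk
    rw [dotProduct_eigenvector_velocity (Vchain_isSymm N ω1) (hg k hk1 hkN) (hpos k hk)
      (fun h => hres k hk1 hkN (by rw [h, sqrt_sq hω.le])) hq0 hp0 hq hp s]
    ring
  have hsq : ∀ k, (g k ⬝ᵥ eVec N N) ^ 2 * (g k ⬝ᵥ eVec N j) ^ 2
      * (ω * c / (nusq N ω1 k - ω ^ 2)) ^ 2 = a k ^ 2 := fun k => by simp only [a, mul_pow]
  show Tendsto (timeAvg fun s => (p s ⬝ᵥ eVec N j) ^ 2 / 2) atTop _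
  simp_rw [hexpand, hsq]
  exact tendsto_timeAvg_sq_sum_mul_cos_sub_cos (Finset.Icc 1 N) a _ hω
    (fun k hk => sqrt_pos.2 (hpos k hk))
    ((injOn_sqrt_nusq hω1.ne').mono fun k hk => (Finset.mem_Icc.1 hk).2)
    fun k hk => (hres k (Finset.mem_Icc.1 hk).1 (Finset.mem_Icc.1 hk).2).symm

theorem stmt17 (N : ℕ) (hN : 1 ≤ N) (ω1 ω c : ℝ) (hω1 : 0 < ω1) (hω : 0 < ω)
    -- no resonance: ω ≠ ν_k for every k
    (hres : ∀ k, 1 ≤ k → k ≤ N → ω ≠ Real.sqrt (nusq N ω1 k))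
    -- orthonormal eigenvectors g_k of V
    (g : ℕ → Fin N → ℝ)
    (hg : ∀ k, 1 ≤ k → k ≤ N →
      (Vchain N ω1).mulVec (g k) = nusq N ω1 k • g k)
    (hgortho : ∀ k l, 1 ≤ k → k ≤ N → 1 ≤ l → l ≤ N →
      g k ⬝ᵥ g l = if k = l then 1 else 0)
    -- the dynamics q̈ = -Vq + c sin(ωt) e_N with zero initial conditions
    (q p : ℝ → Fin N → ℝ) (hq0 : q 0 = 0) (hp0 : p 0 = 0)
    (hq : ∀ t i, HasDerivAt (fun s => q s i) (p t i) t)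
    (hp : ∀ t i, HasDerivAt (fun s => p s i)
      (-(Vchain N ω1).mulVec (q t) i + c * Real.sin (ω * t) * eVec N N i) t) :
    -- the time-averaged kinetic energy of particle j exists and equals the stated value
    ∀ j, 1 ≤ j → j ≤ N →
      Tendsto (fun t => (1 / t) * ∫ s in (0:ℝ)..t, (p s ⬝ᵥ eVec N j) ^ 2 / 2)
        atTop
        (nhds ((1 / 4) * (∑ k ∈ Finset.Icc 1 N,
            (g k ⬝ᵥ eVec N N) * (g k ⬝ᵥ eVec N j) * (ω * c / (nusq N ω1 k - ω ^ 2))) ^ 2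
          + (1 / 4) * ∑ k ∈ Finset.Icc 1 N,
            (g k ⬝ᵥ eVec N N) ^ 2 * (g k ⬝ᵥ eVec N j) ^ 2
              * (ω * c / (nusq N ω1 k - ω ^ 2)) ^ 2)) :=
  stmt17_general N ω1 ω c hω1 hω hres g hg hgortho q p hq0 hp0 hq hp
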